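/- Let G = (V,E) be a finite simple graph and let b be a natural number with b ≤ |V|. Then G has a vertex cover of size at most |V| − b if and only if there exists a set S ⊆ V(G^×) such that the number of edges of G^× with exactly one endpoint in S is at least 4|E| + b. -/

import Mathlib

/-!
We may assume `x ∉ S`, since `S` and its complement cut the same edges. The star at `x` then
contributes `|S ∩ V|` cut edges, and the five-edge gadget of an edge `{u, v}` contributes at most
four, and at most three when `u, v ∈ S`. Removing one endpoint of every edge of `G` inside `S ∩ V`
leaves an independent set with at least `cut(S) - 4|E|` vertices, whose complement is the required
vertex cover. Conversely, if `I` is independent, `S = I ∪ {e_u | u ∉ I}` cuts exactly four edges of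
every gadget, hence `|I| + 4|E|` edges in all.
-/

/-- The graph `G^×` for the Max-Cut reduction: vertices are the original vertices
(`Sum.inl`), one new vertex `x` (`Sum.inr (Sum.inl ())`), and for each edge
`e = {u, v}` of `G` two new vertices `e_u, e_v`, encoded as the darts of `G`
(the dart `(u, v)` plays the role of `e_u`). Edges: `{x, v}` for every original `v`,
and for every edge `e = {u,v}` the five edges `{x, e_u}`, `{x, e_v}`, `{e_u, e_v}`,
`{e_u, u}`, `{e_v, v}`. -/
def maxCutGraph {α : Type*} (G : SimpleGraph α) : SimpleGraph (α ⊕ (Unit ⊕ G.Dart)) :=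
  SimpleGraph.fromRel fun x y =>
    match x, y with
    | Sum.inr (Sum.inl _), Sum.inl _ => True
    | Sum.inr (Sum.inl _), Sum.inr (Sum.inr _) => True
    | Sum.inr (Sum.inr d), Sum.inr (Sum.inr d') => d' = d.symm
    | Sum.inr (Sum.inr d), Sum.inl a => a = d.toProd.1
    | _, _ => False

open Finset

namespace SimpleGraph

variable {V : Type*} (H : SimpleGraph V)

def cutEdges (S : Set V) : Set (Sym2 V) :=
  {e | ∃ x y, H.Adj x y ∧ x ∈ S ∧ y ∉ S ∧ e = s(x, y)}

theorem cutEdges_compl (S : Set V) : H.cutEdges Sᶜ = H.cutEdges S := by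
  ext e
  constructor <;> rintro ⟨x, y, h, hx, hy, rfl⟩ <;>
    exact ⟨y, x, h.symm, by simpa using hy, by simpa using hx, Sym2.eq_swap⟩

open scoped Classical in
theorem ncard_cutEdges [Fintype V] (S : Set V) :
    (H.cutEdges S).ncard = ∑ x, ∑ y, if H.Adj x y ∧ x ∈ S ∧ y ∉ S then 1 else 0 := by
  have hinj : Set.InjOn Sym2.mk.uncurry {p | H.Adj p.1 p.2 ∧ p.1 ∈ S ∧ p.2 ∉ S} := by
    rintro ⟨x, y⟩ ⟨-, hx, hy⟩ ⟨x', y'⟩ ⟨-, hx', hy'⟩ h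
    rcases Sym2.eq_iff.mp h with ⟨rfl, rfl⟩ | ⟨rfl, rfl⟩
    · rfl
    · exact absurd hx hy'
  have himage : H.cutEdges S = Sym2.mk.uncurry '' {p | H.Adj p.1 p.2 ∧ p.1 ∈ S ∧ p.2 ∉ S} := by
    ext e
    simp [cutEdges, eq_comm, and_assoc]
  rw [himage, hinj.ncard_image, Set.ncard_eq_toFinset_card', Set.toFinset_ofPred,
    card_filter, ← Fintype.sum_prod_type']

theorem exists_isVertexCover_ncard_le [Finite V] (A : Set V) :
    ∃ C, H.IsVertexCover C ∧ C.ncard ≤ Aᶜ.ncard + (H.edgeSet ∩ A.sym2).ncard := by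
  refine ⟨Aᶜ ∪ (·.out.1) '' (H.edgeSet ∩ A.sym2), fun v w hvw ↦ ?_, ?_⟩
  · by_contra! h
    simp only [Set.mem_union, Set.mem_compl_iff, not_or, not_not] at h
    have hmem : s(v, w) ∈ H.edgeSet ∩ A.sym2 := ⟨hvw, h.1.1, h.2.1⟩
    rcases Sym2.mem_iff.mp (Sym2.out_fst_mem s(v, w)) with hv | hv
    · exact h.1.2 ⟨_, hmem, hv⟩
    · exact h.2.2 ⟨_, hmem, hv⟩
  · exact (Set.ncard_union_le _ _).trans (by grw [Set.ncard_image_le (Set.toFinite _)])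

theorem sum_darts_eq_sum_edgeFinset [Fintype V] [DecidableEq V] [DecidableRel H.Adj]
    {M : Type*} [AddCommMonoid M] (f : H.Dart → M) :
    ∑ d, f d = ∑ e ∈ H.edgeFinset, ∑ d with d.edge = e, f d :=
  (sum_fiberwise_of_maps_to (fun d _ ↦ mem_edgeFinset.mpr d.edge_mem) f).symm

theorem sum_dart_edge_fiber [Fintype V] [DecidableEq V] [DecidableRel H.Adj]
    {M : Type*} [AddCommMonoid M] (f : H.Dart → M) (d : H.Dart) :
    ∑ d' with d'.edge = d.edge, f d' = f d + f d.symm := by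
  rw [Dart.edge_fiber, sum_pair d.symm_ne.symm]

theorem forall_mem_edgeFinset_iff [Fintype V] [DecidableRel H.Adj] {P : Sym2 V → Prop} :
    (∀ e ∈ H.edgeFinset, P e) ↔ ∀ d : H.Dart, P d.edge := by
  refine ⟨fun h d ↦ h _ (mem_edgeFinset.mpr d.edge_mem), fun h e he ↦ ?_⟩
  induction e using Sym2.ind with
  | _ u v => exact h ⟨(u, v), mem_edgeFinset.mp he⟩

end SimpleGraph

namespace MaxCutGraph

open SimpleGraph

variable {α : Type*} {G : SimpleGraph α}

abbrev apex (G : SimpleGraph α) : α ⊕ (Unit ⊕ G.Dart) := Sum.inr (Sum.inl ())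

abbrev dartVertex (d : G.Dart) : α ⊕ (Unit ⊕ G.Dart) := Sum.inr (Sum.inr d)

open scoped Classical

/-- The cut edges of the gadget of `d = (u, v)` charged to `e_u` when `x ∉ S`: `{x, e_u}`,
`{e_u, u}`, and `{e_u, e_v}` if it leaves `S` at `e_u`. Every gadget edge is charged to exactly one
of `d`, `d.symm`. -/
noncomputable def dartCut (S : Set (α ⊕ (Unit ⊕ G.Dart))) (d : G.Dart) : ℕ :=
  (if dartVertex d ∈ S then 1 else 0) +
    (if dartVertex d ∈ S ∧ dartVertex d.symm ∉ S then 1 else 0) +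
    (if dartVertex d ∈ S ∧ Sum.inl d.fst ∉ S then 1 else 0) +
    (if Sum.inl d.fst ∈ S ∧ dartVertex d ∉ S then 1 else 0)

theorem ncard_cutEdges_eq_sum_dartCut [Fintype α] {S : Set (α ⊕ (Unit ⊕ G.Dart))} (hS : apex G ∉ S) :
    ((maxCutGraph G).cutEdges S).ncard =
      (Sum.inl ⁻¹' S).ncard + ∑ d, dartCut S d := by
  have hA : (Sum.inl ⁻¹' S).ncard = ∑ a, if Sum.inl a ∈ S then 1 else 0 := by
    rw [Set.ncard_eq_toFinset_card', ← card_filter]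
    congr 1
    ext a
    simp
  rw [SimpleGraph.ncard_cutEdges, hA]
  simp only [Fintype.sum_sum_type, maxCutGraph, fromRel_adj, ne_eq, reduceCtorEq,
    not_false_eq_true, true_and, Sum.inl.injEq, Sum.inr.injEq, or_false, false_or, and_false,
    false_and, if_false, sum_const_zero, add_zero, zero_add, Fintype.sum_unique, hS]
  have hsymm : ∀ d d' : G.Dart, (¬d = d' ∧ (d' = d.symm ∨ d = d'.symm)) ↔ d' = d.symm := by
    intro d d'
    constructor
    · rintro ⟨-, h | rfl⟩
      · exact h
      · exact (Dart.symm_symm d').symm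
    · rintro rfl
      exact ⟨d.symm_ne.symm, Or.inl rfl⟩
  simp only [and_true, hsymm, ite_and, sum_add_distrib, sum_ite_eq', mem_univ, if_true]
  rw [sum_comm (γ := α)]
  simp only [ite_and, sum_ite_eq', mem_univ, if_true, dartCut, sum_add_distrib]
  ring

theorem dartCut_add_dartCut_symm_add_le (S : Set (α ⊕ (Unit ⊕ G.Dart))) (d : G.Dart) :
    dartCut S d + dartCut S d.symm + (if Sum.inl d.fst ∈ S ∧ Sum.inl d.snd ∈ S then 1 else 0)
      ≤ 4 := by
  simp only [dartCut, Dart.symm_symm, Dart.symm_toProd, Prod.fst_swap]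
  by_cases Sum.inl d.fst ∈ S <;> by_cases Sum.inl d.snd ∈ S <;>
    by_cases dartVertex d ∈ S <;> by_cases dartVertex d.symm ∈ S <;> simp [*]

def ofIndepSet (G : SimpleGraph α) (I : Set α) : Set (α ⊕ (Unit ⊕ G.Dart)) :=
  {p | Sum.elim (· ∈ I) (Sum.elim (fun _ ↦ False) (fun d ↦ d.fst ∉ I)) p}

theorem dartCut_add_dartCut_symm_ofIndepSet {I : Set α} {d : G.Dart}
    (h : ¬(d.fst ∈ I ∧ d.snd ∈ I)) :
    dartCut (ofIndepSet G I) d + dartCut (ofIndepSet G I) d.symm = 4 := by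
  simp only [dartCut, ofIndepSet, Set.mem_ofPred_eq, Sum.elim_inl, Sum.elim_inr, Dart.symm_toProd,
    Prod.fst_swap]
  by_cases d.fst ∈ I <;> by_cases d.snd ∈ I <;> simp_all

variable [Fintype α]

theorem ncard_cutEdges_add_le {S : Set (α ⊕ (Unit ⊕ G.Dart))} (hS : apex G ∉ S) :
    ((maxCutGraph G).cutEdges S).ncard + (G.edgeSet ∩ (Sum.inl ⁻¹' S).sym2).ncard ≤
      (Sum.inl ⁻¹' S).ncard + 4 * G.edgeSet.ncard := by
  have hinside : (G.edgeSet ∩ (Sum.inl ⁻¹' S).sym2).ncard =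
      ∑ e ∈ G.edgeFinset, if e ∈ (Sum.inl ⁻¹' S).sym2 then 1 else 0 := by
    rw [Set.ncard_eq_toFinset_card', ← card_filter]
    congr 1
    ext e
    simp
  have hedge : ∀ e ∈ G.edgeFinset,
      ∑ d with d.edge = e, dartCut S d + (if e ∈ (Sum.inl ⁻¹' S).sym2 then 1 else 0) ≤ 4 := by
    refine G.forall_mem_edgeFinset_iff.mpr fun d ↦ ?_
    rw [sum_dart_edge_fiber]
    simpa [Dart.edge] using dartCut_add_dartCut_symm_add_le S d
  rw [ncard_cutEdges_eq_sum_dartCut hS, hinside, ← coe_edgeFinset, Set.ncard_coe_finset,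
    sum_darts_eq_sum_edgeFinset, add_assoc, ← sum_add_distrib]
  grw [sum_le_sum hedge, sum_const, smul_eq_mul, mul_comm]

theorem ncard_cutEdges_ofIndepSet {I : Set α} (hI : G.IsIndepSet I) :
    ((maxCutGraph G).cutEdges (ofIndepSet G I)).ncard = I.ncard + 4 * G.edgeSet.ncard := by
  have hedge : ∀ e ∈ G.edgeFinset, ∑ d with d.edge = e, dartCut (ofIndepSet G I) d = 4 := by
    refine G.forall_mem_edgeFinset_iff.mpr fun d ↦ ?_
    rw [sum_dart_edge_fiber]
    exact dartCut_add_dartCut_symm_ofIndepSet fun h ↦ hI h.1 h.2 d.fst_ne_snd d.adj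
  have hI : Sum.inl ⁻¹' ofIndepSet G I = I := by
    ext a
    simp [ofIndepSet]
  rw [ncard_cutEdges_eq_sum_dartCut (by simp [ofIndepSet]), hI, sum_darts_eq_sum_edgeFinset, sum_congr rfl hedge,
    sum_const, smul_eq_mul, mul_comm, ← coe_edgeFinset, Set.ncard_coe_finset]

theorem exists_isVertexCover_of_le_ncard_cutEdges {b : ℕ} {S : Set (α ⊕ (Unit ⊕ G.Dart))}
    (h : 4 * G.edgeSet.ncard + b ≤ ((maxCutGraph G).cutEdges S).ncard) :
    ∃ C, G.IsVertexCover C ∧ C.ncard ≤ Fintype.card α - b := by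
  wlog hS : apex G ∉ S generalizing S
  · exact this (by rwa [cutEdges_compl]) hS
  obtain ⟨C, hC, hcard⟩ := G.exists_isVertexCover_ncard_le (Sum.inl ⁻¹' S)
  have hcompl := Set.ncard_add_ncard_compl (Sum.inl ⁻¹' S : Set α)
  have hcut := ncard_cutEdges_add_le hS
  rw [Nat.card_eq_fintype_card] at hcompl
  exact ⟨C, hC, by omega⟩

end MaxCutGraph

/-- For a finite graph `G = (V, E)` and `b ≤ |V|`: `G` has a vertex
cover of size at most `|V| − b` iff there is a set `S` of vertices of `G^×` whose cut
(the set of edges of `G^×` with exactly one endpoint in `S`) has size at least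
`4|E| + b`. -/
theorem stmt_17 {α : Type*} [Fintype α] (G : SimpleGraph α) (b : ℕ)
    (hb : b ≤ Fintype.card α) :
    (∃ C : Set α, (∀ ⦃x y : α⦄, G.Adj x y → x ∈ C ∨ y ∈ C) ∧
        C.ncard ≤ Fintype.card α - b) ↔
    (∃ S : Set (α ⊕ (Unit ⊕ G.Dart)),
      4 * G.edgeSet.ncard + b ≤
        {e : Sym2 (α ⊕ (Unit ⊕ G.Dart)) | ∃ x y, (maxCutGraph G).Adj x y ∧
          x ∈ S ∧ y ∉ S ∧ e = s(x, y)}.ncard) := by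
  constructor
  · rintro ⟨C, hC, hcard⟩
    refine ⟨MaxCutGraph.ofIndepSet G Cᶜ, ?_⟩
    have hcut := MaxCutGraph.ncard_cutEdges_ofIndepSet
      (SimpleGraph.isIndepSet_compl_iff_isVertexCover.mpr hC)
    have hcompl := Set.ncard_add_ncard_compl C
    rw [Nat.card_eq_fintype_card] at hcompl
    change _ ≤ ((maxCutGraph G).cutEdges _).ncard
    omega
  · rintro ⟨S, hS⟩
    exact MaxCutGraph.exists_isVertexCover_of_le_ncard_cutEdges hS
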